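/- arXiv:2503.12219 — 6 statements merged into one kernel-verified Lean document; each statement's English description precedes it below -/
import Mathlib

section
/- Let f be a homogeneous polynomial of degree D ≥ 2 in two real variables and let ℓ(x,y) = ax + by be a nonzero linear form. Then the Hessian of the product ℓ·f satisfies Hess(ℓf)(x,y) = ((D+1)/(D-1))·ℓ(x,y)²·Hess(f)(x,y) − (a·f_y(x,y) − b·f_x(x,y))² for all (x,y). -/
/-!
By the product rule, `Hess (ℓ * f)` is a polynomial in `ℓ`, `a`, `b` and the first and second
partial derivatives of `f`, in which `f` itself does not occur. Euler's identity for the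
homogeneous polynomials `f_x` and `f_y` of degree `D - 1` gives
`x f_xx + y f_xy = (D - 1) f_x` and `x f_xy + y f_yy = (D - 1) f_y`, and modulo these two
relations `(D - 1) Hess (ℓ f)` equals `(D + 1) ℓ² Hess f - (D - 1) (a f_y - b f_x)²`.
-/

open MvPolynomial Real

/-- The Hessian polynomial `f_xx * f_yy - f_xy ^ 2` of a bivariate real polynomial. -/
noncomputable def Hess (f : MvPolynomial (Fin 2) ℝ) : MvPolynomial (Fin 2) ℝ :=
  pderiv 0 (pderiv 0 f) * pderiv 1 (pderiv 1 f) - (pderiv 1 (pderiv 0 f)) ^ 2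

/-- A bivariate polynomial is hyperbolic if its Hessian is negative off the origin. -/
def Hyperbolic (f : MvPolynomial (Fin 2) ℝ) : Prop :=
  ∀ x y : ℝ, ¬(x = 0 ∧ y = 0) → eval ![x, y] (Hess f) < 0

namespace MvPolynomial

variable {σ R : Type*} [CommRing R]

theorem pderiv_comm (i j : σ) (f : MvPolynomial σ R) :
    pderiv i (pderiv j f) = pderiv j (pderiv i f) := by
  -- the commutator of two derivations is a derivation, and this one kills every variable
  have hbracket : ⁅pderiv (R := R) i, pderiv (R := R) j⁆ = 0 := by
    classical
    refine derivation_ext fun k => ?_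
    rw [Derivation.commutator_apply]
    simp [pderiv_X, Pi.single_apply, apply_ite]
  rw [← sub_eq_zero, ← Derivation.commutator_apply, hbracket, Derivation.zero_apply]

theorem IsHomogeneous.sum_X_mul_pderiv_pderiv [Fintype σ] {φ : MvPolynomial σ R} {n : ℕ}
    (hφ : φ.IsHomogeneous n) (i : σ) :
    ∑ j, X j * pderiv j (pderiv i φ) = ((n : MvPolynomial σ R) - 1) * pderiv i φ := by
  classical
  have h := congrArg (pderiv i) hφ.sum_X_mul_pderiv
  simp only [map_sum, pderiv_mul, pderiv_X, nsmul_eq_mul, Derivation.map_natCast, zero_mul,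
    zero_add, Finset.sum_add_distrib, Pi.single_apply, ite_mul, one_mul, Finset.sum_ite_eq',
    Finset.mem_univ, if_true, pderiv_comm i] at h
  linear_combination h

end MvPolynomial

theorem hess_linear_mul_eq (a b : ℝ) (f : MvPolynomial (Fin 2) ℝ) :
    Hess ((C a * X 0 + C b * X 1) * f) =
      (2 * C a * pderiv 0 f + (C a * X 0 + C b * X 1) * pderiv 0 (pderiv 0 f)) *
          (2 * C b * pderiv 1 f + (C a * X 0 + C b * X 1) * pderiv 1 (pderiv 1 f))
        - (C a * pderiv 1 f + C b * pderiv 0 f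
            + (C a * X 0 + C b * X 1) * pderiv 1 (pderiv 0 f)) ^ 2 := by
  simp only [Hess, map_add, pderiv_mul, pderiv_X_self,
    pderiv_X_of_ne (zero_ne_one : (0 : Fin 2) ≠ 1), pderiv_X_of_ne (one_ne_zero : (1 : Fin 2) ≠ 0),
    pderiv_C, pderiv_one, map_zero]
  ring

theorem hess_linear_mul_general (D : ℕ) (hD : 2 ≤ D) (f : MvPolynomial (Fin 2) ℝ)
    (hf : f.IsHomogeneous D) (a b : ℝ) :
    Hess ((C a * X 0 + C b * X 1) * f) =
      C ((D + 1 : ℝ) / (D - 1)) * (C a * X 0 + C b * X 1) ^ 2 * Hess f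
        - (C a * pderiv 1 f - C b * pderiv 0 f) ^ 2 := by
  have hD1 : (D : ℝ) - 1 ≠ 0 := by
    have : (2 : ℝ) ≤ D := by exact_mod_cast hD
    linarith
  have hcast : (D : MvPolynomial (Fin 2) ℝ) - 1 = C ((D : ℝ) - 1) := by simp
  have hscale : C (((D : ℝ) + 1) / (D - 1)) * ((D : MvPolynomial (Fin 2) ℝ) - 1) =
      (D : MvPolynomial (Fin 2) ℝ) + 1 := by
    rw [hcast, ← map_mul, div_mul_cancel₀ _ hD1]
    simp
  have euler_x := hf.sum_X_mul_pderiv_pderiv 0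
  have euler_y := hf.sum_X_mul_pderiv_pderiv 1
  rw [Fin.sum_univ_two] at euler_x euler_y
  rw [pderiv_comm 0 1] at euler_y
  refine mul_left_cancel₀ (hcast.trans_ne (C_ne_zero.mpr hD1)) ?_
  rw [hess_linear_mul_eq, Hess]
  linear_combination
    (-((C a * X 0 + C b * X 1) ^ 2 *
        (pderiv 0 (pderiv 0 f) * pderiv 1 (pderiv 1 f) - (pderiv 1 (pderiv 0 f)) ^ 2))) * hscale
    + (2 * (C a * X 0 + C b * X 1) *
        (C b * pderiv 1 (pderiv 0 f) - C a * pderiv 1 (pderiv 1 f))) * euler_x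
    + (2 * (C a * X 0 + C b * X 1) *
        (C a * pderiv 1 (pderiv 0 f) - C b * pderiv 0 (pderiv 0 f))) * euler_y

theorem hess_linear_mul (D : ℕ) (hD : 2 ≤ D) (f : MvPolynomial (Fin 2) ℝ)
    (hf : f.IsHomogeneous D) (a b : ℝ) (hab : ¬(a = 0 ∧ b = 0)) :
    Hess ((C a * X 0 + C b * X 1) * f) =
      C ((D + 1 : ℝ) / (D - 1)) * (C a * X 0 + C b * X 1) ^ 2 * Hess f
        - (C a * pderiv 1 f - C b * pderiv 0 f) ^ 2 :=
  hess_linear_mul_general D hD f hf a b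
end

section
/- Let f be a homogeneous polynomial of degree D ≥ 2 in two real variables that is hyperbolic (i.e., Hess(f) < 0 on ℝ² \ {0}), and let ℓ(x,y) = ax + by be a nonzero linear form. Then the product ℓ·f is hyperbolic of degree D+1 if and only if ℓ does not divide the polynomial a·f_y − b·f_x. -/
open MvPolynomial Real

/-!
Write `ℓ = a x + b y` and `g = a f_y - b f_x`. Expanding `Hess (ℓ f)` and simplifying with Euler's
identities for `f_x` and `f_y` gives, for `f` of degree `n + 1`,
  `n · Hess (ℓ f) = (n + 2) ℓ² Hess f - n g²`.
Off the line `ℓ = 0` the right-hand side is negative since `f` is hyperbolic, and on that line it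
is `-n g²`. So `ℓ f` is hyperbolic iff `g` does not vanish at `(-b, a)`, and for the homogeneous
`g` this means `ℓ ∤ g`: modulo `ℓ` the variables `(x, y)` become `M · (-b, a)` for a linear
form `M`, so `g ≡ Mⁿ g(-b, a)`.
-/

theorem isCoprime_of_ne_zero_or_ne_zero {K : Type*} [Field K] {a b : K} (h : a ≠ 0 ∨ b ≠ 0) :
    IsCoprime a b := by
  rcases h with ha | hb
  · exact ⟨a⁻¹, 0, by simp [ha]⟩
  · exact ⟨0, b⁻¹, by simp [hb]⟩

theorem exists_eq_mul_of_mul_add_mul_eq_zero {K : Type*} [Field K] {a b x y : K}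
    (hab : a ≠ 0 ∨ b ≠ 0) (h : a * x + b * y = 0) : ∃ t, x = t * -b ∧ y = t * a := by
  rcases hab with ha | hb
  · exact ⟨y / a, by field_simp; linear_combination h, by field_simp⟩
  · exact ⟨-x / b, by field_simp, by field_simp; linear_combination h⟩

namespace MvPolynomial

theorem IsHomogeneous.aeval_smul {R S σ : Type*} [CommSemiring R] [CommSemiring S] [Algebra R S]
    {φ : MvPolynomial σ R} {n : ℕ} (hφ : φ.IsHomogeneous n) (r : S) (x : σ → S) :
    MvPolynomial.aeval (r • x) φ = r ^ n * MvPolynomial.aeval x φ := by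
  conv_lhs => rw [φ.as_sum]
  conv_rhs => rw [φ.as_sum]
  simp only [map_sum, Finset.mul_sum, aeval_monomial]
  refine Finset.sum_congr rfl fun d hd => ?_
  rw [hφ.degree_eq_sum_deg_support hd, ← Finset.prod_pow_eq_pow_sum]
  simp only [Finsupp.prod, Pi.smul_apply, smul_eq_mul, mul_pow, Finset.prod_mul_distrib]
  ring

theorem pderiv_pderiv_comm {R σ : Type*} [CommRing R] (i j : σ) (p : MvPolynomial σ R) :
    pderiv i (pderiv j p) = pderiv j (pderiv i p) := by
  have h : ⁅pderiv (R := R) i, pderiv (R := R) j⁆ = 0 := by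
    refine derivation_ext fun k => ?_
    rw [Derivation.commutator_apply]
    classical simp [pderiv_X, Pi.single_apply, apply_ite]
  rw [← sub_eq_zero, ← Derivation.commutator_apply, h, Derivation.zero_apply]

theorem linearForm_dvd_of_eval_eq_zero {R : Type*} [CommRing R] {g : MvPolynomial (Fin 2) R}
    {n : ℕ} (hg : g.IsHomogeneous n) {a b : R} (hab : IsCoprime a b) (hg0 : eval ![-b, a] g = 0) :
    C a * X 0 + C b * X 1 ∣ g := by
  obtain ⟨c, d, hcd⟩ := hab
  set L : MvPolynomial (Fin 2) R := C a * X 0 + C b * X 1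
  set M : MvPolynomial (Fin 2) R := C c * X 1 - C d * X 0
  have hX : ∀ i, X i - C (![-b, a] i) * M = L * C (![c, d] i) := by
    have hcd' := congr(C (σ := Fin 2) $hcd)
    simp only [map_add, map_mul, map_one] at hcd'
    refine Fin.forall_fin_two.2 ⟨?_, ?_⟩ <;>
      simp only [L, M, Matrix.cons_val_zero, Matrix.cons_val_one, map_neg]
    · linear_combination -(X 0 : MvPolynomial (Fin 2) R) * hcd'
    · linear_combination -(X 1 : MvPolynomial (Fin 2) R) * hcd'
  set q := Ideal.Quotient.mkₐ R (Ideal.span {L})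
  have hqX : (fun i => q (X i)) = q M • (algebraMap R _ ∘ ![-b, a]) := by
    funext i
    rw [Pi.smul_apply, Function.comp_apply, smul_eq_mul, ← q.commutes, algebraMap_eq, ← map_mul,
      mul_comm, Ideal.Quotient.mkₐ_eq_mk, Ideal.Quotient.mk_eq_mk_iff_sub_mem, hX]
    exact Ideal.mul_mem_right _ _ (Ideal.mem_span_singleton_self L)
  rw [← Ideal.Quotient.eq_zero_iff_dvd, ← Ideal.Quotient.mkₐ_eq_mk R, ← aeval_X_left_apply g,
    comp_aeval_apply, hqX, hg.aeval_smul, aeval_algebraMap_apply, aeval_eq_eval, hg0, map_zero,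
    mul_zero]

theorem eval_ne_zero_of_not_linearForm_dvd {K : Type*} [Field K] {g : MvPolynomial (Fin 2) K}
    {n : ℕ} (hg : g.IsHomogeneous n) {a b x y : K} (hab : a ≠ 0 ∨ b ≠ 0)
    (hxy : ¬(x = 0 ∧ y = 0)) (hℓ : a * x + b * y = 0) (hndvd : ¬C a * X 0 + C b * X 1 ∣ g) :
    eval ![x, y] g ≠ 0 := by
  obtain ⟨t, rfl, rfl⟩ := exists_eq_mul_of_mul_add_mul_eq_zero hab hℓ
  have ht : t ≠ 0 := by rintro rfl; simp at hxy
  have hg0 : eval ![-b, a] g ≠ 0 := fun h =>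
    hndvd (linearForm_dvd_of_eval_eq_zero hg (isCoprime_of_ne_zero_or_ne_zero hab) h)
  have h := hg.aeval_smul t ![-b, a]
  simp only [aeval_eq_eval, Matrix.smul_cons, smul_eq_mul, Matrix.smul_empty] at h
  rw [h]
  exact mul_ne_zero (pow_ne_zero _ ht) hg0

end MvPolynomial

theorem hess_linearForm_mul {n : ℕ} {f : MvPolynomial (Fin 2) ℝ} (hf : f.IsHomogeneous (n + 1))
    (a b : ℝ) :
    (n : MvPolynomial (Fin 2) ℝ) * Hess ((C a * X 0 + C b * X 1) * f) =
      ((n : MvPolynomial (Fin 2) ℝ) + 2) * (C a * X 0 + C b * X 1) ^ 2 * Hess f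
        - (n : MvPolynomial (Fin 2) ℝ) * (C a * pderiv 1 f - C b * pderiv 0 f) ^ 2 := by
  have euler (i : Fin 2) : X 0 * pderiv 0 (pderiv i f) + X 1 * pderiv 1 (pderiv i f) =
      (n : MvPolynomial (Fin 2) ℝ) * pderiv i f := by
    simpa [Fin.sum_univ_two, nsmul_eq_mul] using (hf.pderiv (i := i)).sum_X_mul_pderiv
  have euler_x := euler 0
  have euler_y := euler 1
  rw [pderiv_pderiv_comm 0 1] at euler_y
  simp only [Hess, pderiv_mul, map_add, pderiv_X_self, pderiv_C,
    pderiv_X_of_ne (by decide : (1 : Fin 2) ≠ 0), pderiv_X_of_ne (by decide : (0 : Fin 2) ≠ 1),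
    mul_zero, mul_one, zero_mul, add_zero, zero_add]
  linear_combination (-2 * (C a * X 0 + C b * X 1) *
      (C a * pderiv 1 (pderiv 1 f) - C b * pderiv 1 (pderiv 0 f))) * euler_x +
    (-2 * (C a * X 0 + C b * X 1) *
      (C b * pderiv 0 (pderiv 0 f) - C a * pderiv 1 (pderiv 0 f))) * euler_y

theorem linear_mul_hyperbolic_iff (D : ℕ) (hD : 2 ≤ D) (f : MvPolynomial (Fin 2) ℝ)
    (hf : f.IsHomogeneous D) (hyp : Hyperbolic f) (a b : ℝ) (hab : ¬(a = 0 ∧ b = 0)) :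
    Hyperbolic ((C a * X 0 + C b * X 1) * f) ↔
      ¬ (C a * X 0 + C b * X 1) ∣ (C a * pderiv 1 f - C b * pderiv 0 f) := by
  obtain ⟨n, rfl⟩ : ∃ n, D = n + 1 := ⟨D - 1, by omega⟩
  have hn : (0 : ℝ) < n := by exact_mod_cast (by omega : 0 < n)
  rw [not_and_or] at hab
  set g := C a * pderiv 1 f - C b * pderiv 0 f
  have hg : g.IsHomogeneous n := (hf.pderiv.C_mul a).sub (hf.pderiv.C_mul b)
  have key (x y : ℝ) : n * eval ![x, y] (Hess ((C a * X 0 + C b * X 1) * f)) =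
      (n + 2) * (a * x + b * y) ^ 2 * eval ![x, y] (Hess f) - n * eval ![x, y] g ^ 2 := by
    simpa [g] using congr(eval ![x, y] $(hess_linearForm_mul hf a b))
  constructor
  · rintro hyp' ⟨q, hq⟩
    have hH : (n : ℝ) * eval ![-b, a] (Hess ((C a * X 0 + C b * X 1) * f)) = 0 := by
      rw [key, hq]
      simp only [map_mul, map_add, eval_C, eval_X, Matrix.cons_val_zero, Matrix.cons_val_one]
      ring
    exact (mul_neg_of_pos_of_neg hn (hyp' (-b) a (by rw [neg_eq_zero]; tauto))).ne hH
  · intro hndvd x y hxy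
    rcases eq_or_ne (a * x + b * y) 0 with hℓ | hℓ
    · have hgxy := eval_ne_zero_of_not_linearForm_dvd hg hab hxy hℓ hndvd
      have hkey := key x y
      rw [hℓ] at hkey
      nlinarith [mul_pos hn (sq_pos_of_ne_zero hgxy)]
    · nlinarith [key x y, mul_neg_of_pos_of_neg
        (by positivity : (0 : ℝ) < (n + 2) * (a * x + b * y) ^ 2) (hyp x y hxy),
        mul_nonneg hn.le (sq_nonneg (eval ![x, y] g))]
end

section
/- For every integer n ≥ 11 and every x ∈ [0,1], the inequality −8n² − 8n²x² + 16n⁴·(1−x²)²·x^{2(n−1)} < 0 holds. -/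
/-!
Put `t = x²` and `m = n - 1`; dividing by `8n²` the claim becomes `2n²(1-t)²tᵐ < 1 + t`.
For `t ≤ 1/2` this holds since `tᵐ ≤ 2⁻ᵐ` and `2n² < 2ᵐ`. For `t > 1/2`, the bound
`tᵐ ≤ exp(-m(1-t))` together with `s² e⁻ˢ ≤ 4e⁻²` gives
`2n²(1-t)²tᵐ ≤ 8e⁻²(n/m)² ≤ 8 · 0.1354 · 1.21 < 3/2 < 1 + t`.
-/

open Real

lemma pow_le_exp_neg_mul_one_sub {t : ℝ} (ht : 0 ≤ t) (m : ℕ) :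
    t ^ m ≤ exp (-(m * (1 - t))) := by
  calc t ^ m = (1 - (1 - t)) ^ m := by ring
    _ ≤ exp (-(1 - t)) ^ m := pow_le_pow_left₀ (by linarith) (one_sub_le_exp_neg _) m
    _ = exp (-(m * (1 - t))) := by rw [← exp_nat_mul]; ring_nf

lemma sq_mul_exp_neg_le {s : ℝ} (hs : 0 ≤ s) : s ^ 2 * exp (-s) ≤ 4 * exp (-2) := by
  have h : (s / 2) * exp (-(s / 2)) ≤ exp (-1) := mul_exp_neg_le_exp_neg_one _
  calc s ^ 2 * exp (-s) = 4 * ((s / 2) * exp (-(s / 2))) ^ 2 := by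
        rw [mul_pow, ← exp_nat_mul]; ring_nf
    _ ≤ 4 * exp (-1) ^ 2 := by gcongr
    _ = 4 * exp (-2) := by rw [← exp_nat_mul]; norm_num

lemma sq_mul_sq_one_sub_mul_pow_le (m : ℕ) {t : ℝ} (ht0 : 0 ≤ t) (ht1 : t ≤ 1) :
    (m : ℝ) ^ 2 * ((1 - t) ^ 2 * t ^ m) ≤ 4 * exp (-2) := by
  have hs : 0 ≤ (m : ℝ) * (1 - t) := by have := sub_nonneg.2 ht1; positivity
  calc (m : ℝ) ^ 2 * ((1 - t) ^ 2 * t ^ m) = (m * (1 - t)) ^ 2 * t ^ m := by ring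
    _ ≤ (m * (1 - t)) ^ 2 * exp (-(m * (1 - t))) := by
        gcongr; exact pow_le_exp_neg_mul_one_sub ht0 m
    _ ≤ 4 * exp (-2) := sq_mul_exp_neg_le hs

lemma two_mul_succ_sq_lt_two_pow {m : ℕ} (hm : 10 ≤ m) : 2 * (m + 1) ^ 2 < 2 ^ m := by
  induction m, hm using Nat.le_induction with
  | base => norm_num
  | succ k hk ih =>
    calc 2 * (k + 1 + 1) ^ 2 ≤ 2 * (2 * (k + 1) ^ 2) := by nlinarith
      _ < 2 * 2 ^ k := by omega
      _ = 2 ^ (k + 1) := by ring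

lemma two_mul_succ_sq_mul_sq_one_sub_mul_pow_lt {m : ℕ} (hm : 10 ≤ m) {t : ℝ}
    (ht0 : 0 ≤ t) (ht1 : t ≤ 1) :
    2 * ((m : ℝ) + 1) ^ 2 * ((1 - t) ^ 2 * t ^ m) < 1 + t := by
  rcases le_or_gt t (1 / 2) with hsmall | hlarge
  · have hcoef : 2 * ((m : ℝ) + 1) ^ 2 < 2 ^ m := by
      exact_mod_cast two_mul_succ_sq_lt_two_pow hm
    have hpow : t ^ m ≤ (1 / 2) ^ m := pow_le_pow_left₀ ht0 hsmall m
    calc 2 * ((m : ℝ) + 1) ^ 2 * ((1 - t) ^ 2 * t ^ m)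
        ≤ 2 * ((m : ℝ) + 1) ^ 2 * (1 * (1 / 2) ^ m) := by
          gcongr
          nlinarith
      _ = 2 * ((m : ℝ) + 1) ^ 2 / 2 ^ m := by rw [one_mul, one_div_pow, mul_one_div]
      _ < 1 := (div_lt_one (by positivity)).2 hcoef
      _ ≤ 1 + t := by linarith
  · have hm' : (10 : ℝ) ≤ m := by exact_mod_cast hm
    have hbound := sq_mul_sq_one_sub_mul_pow_le m ht0 ht1
    have hexp : exp (-2) < 0.1354 := by
      have h := exp_neg_one_lt_d9
      have h0 := (exp_pos (-1)).le
      calc exp (-2) = exp (-1) ^ 2 := by rw [← exp_nat_mul]; norm_num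
        _ < 0.1354 := by nlinarith
    have hP : 0 ≤ (1 - t) ^ 2 * t ^ m := by have := pow_nonneg ht0 m; positivity
    have hratio : ((m : ℝ) + 1) ^ 2 ≤ 121 / 100 * (m : ℝ) ^ 2 := by nlinarith
    nlinarith [mul_le_mul_of_nonneg_right hratio hP]

theorem ineq_one (n : ℕ) (hn : 11 ≤ n) (x : ℝ) (hx : x ∈ Set.Icc (0 : ℝ) 1) :
    -8 * (n : ℝ) ^ 2 - 8 * (n : ℝ) ^ 2 * x ^ 2
      + 16 * (n : ℝ) ^ 4 * ((1 - x ^ 2) ^ 2 * x ^ (2 * (n - 1))) < 0 := by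
  obtain ⟨m, rfl⟩ : ∃ m, n = m + 1 := ⟨n - 1, by omega⟩
  have hkey := two_mul_succ_sq_mul_sq_one_sub_mul_pow_lt (m := m) (by omega) (t := x ^ 2)
    (by positivity) (pow_le_one₀ hx.1 hx.2)
  have hpos : (0 : ℝ) < 8 * ((m : ℝ) + 1) ^ 2 := by positivity
  rw [Nat.add_sub_cancel, pow_mul]
  push_cast
  nlinarith [mul_lt_mul_of_pos_left hkey hpos]
end

section
/- For every integer n ≥ 11 and every x ∈ [0,1], the inequality −12n − 4nx² + 16n³·(1−x²)²·x^{2(n−1)} < 0 holds. -/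
/-!
Write `s = 1 - x²`, so that `x^(2(n-1)) = (1 - s)^(n-1) ≤ exp (-(n-1) s)`. Since `y e^{-y} ≤ e^{-1}`,
applied to `y = (n-1) s / 2`, the middle factor satisfies `s² (1-s)^(n-1) ≤ 4 / ((n-1)² e²)`.
The positive term is therefore at most `64 n³ / ((n-1)² e²)`, which is below `12 n` as soon as
`(n / (n-1))² < 3e²/16`, in particular for `n ≥ 11`.
-/

open Real

lemma one_sub_pow_le_exp_neg_mul {s : ℝ} (hs : s ≤ 1) (m : ℕ) :
    (1 - s) ^ m ≤ exp (-(m * s)) := by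
  calc (1 - s) ^ m ≤ exp (-s) ^ m := pow_le_pow_left₀ (by linarith) (one_sub_le_exp_neg s) m
    _ = exp (-(m * s)) := by rw [← exp_nat_mul]; ring_nf

lemma sq_mul_exp_neg_mul_le {m s : ℝ} (hm : 0 < m) (hs : 0 ≤ s) :
    s ^ 2 * exp (-(m * s)) ≤ 4 / (m ^ 2 * exp 1 ^ 2) := by
  have key : s ^ 2 * exp (-(m * s)) * (m ^ 2 * exp 1 ^ 2)
      = 4 * ((m * s / 2) * exp (-(m * s / 2)) * exp 1) ^ 2 := by
    rw [mul_pow, mul_pow, ← exp_nat_mul (-(m * s / 2))]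
    push_cast; ring_nf
  have hbound : (m * s / 2) * exp (-(m * s / 2)) * exp 1 ≤ 1 := by
    calc _ ≤ exp (-1) * exp 1 := by gcongr; exact mul_exp_neg_le_exp_neg_one _
      _ = 1 := by rw [← exp_add]; norm_num
  rw [le_div_iff₀ (by positivity), key]
  nlinarith [pow_le_one₀ (by positivity) hbound (n := 2)]

lemma sq_mul_one_sub_pow_le {s : ℝ} (hs₀ : 0 ≤ s) (hs : s ≤ 1) {m : ℕ} (hm : 0 < m) :
    s ^ 2 * (1 - s) ^ m ≤ 4 / (m ^ 2 * exp 1 ^ 2) :=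
  (mul_le_mul_of_nonneg_left (one_sub_pow_le_exp_neg_mul hs m) (sq_nonneg s)).trans
    (sq_mul_exp_neg_mul_le (by exact_mod_cast hm) hs₀)

lemma sixtyFour_mul_pow_three_lt {n : ℝ} (hn : 11 ≤ n) :
    64 * n ^ 3 < 12 * n * ((n - 1) ^ 2 * exp 1 ^ 2) := by
  have he : 7.29 < exp 1 ^ 2 := by nlinarith [exp_one_gt_d9]
  have hratio : 16 * n ^ 2 < 3 * (n - 1) ^ 2 * exp 1 ^ 2 := by
    nlinarith [mul_lt_mul_of_pos_left he (pow_pos (by linarith : 0 < n - 1) 2)]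
  nlinarith [mul_lt_mul_of_pos_left hratio (by linarith : 0 < 4 * n)]

theorem ineq_two (n : ℕ) (hn : 11 ≤ n) (x : ℝ) (hx : x ∈ Set.Icc (0 : ℝ) 1) :
    -12 * (n : ℝ) - 4 * (n : ℝ) * x ^ 2
      + 16 * (n : ℝ) ^ 3 * ((1 - x ^ 2) ^ 2 * x ^ (2 * (n - 1))) < 0 := by
  obtain ⟨hx₀, hx₁⟩ := hx
  have hpow : x ^ (2 * (n - 1)) = (1 - (1 - x ^ 2)) ^ (n - 1) := by rw [pow_mul]; ring
  have hprofile := sq_mul_one_sub_pow_le (s := 1 - x ^ 2) (by nlinarith) (by nlinarith)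
    (m := n - 1) (by omega)
  rw [← hpow, Nat.cast_sub (by omega), Nat.cast_one] at hprofile
  have hn' : (11 : ℝ) ≤ n := by exact_mod_cast hn
  have hnumeric : 16 * (n : ℝ) ^ 3 * (4 / (((n : ℝ) - 1) ^ 2 * exp 1 ^ 2)) < 12 * n := by
    rw [← mul_div_assoc, div_lt_iff₀ (mul_pos (pow_pos (by linarith) 2) (pow_pos (exp_pos 1) 2))]
    linarith [sixtyFour_mul_pow_three_lt hn']
  have hmain : 16 * (n : ℝ) ^ 3 * ((1 - x ^ 2) ^ 2 * x ^ (2 * (n - 1))) < 12 * n :=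
    (mul_le_mul_of_nonneg_left hprofile (by positivity)).trans_lt hnumeric
  nlinarith [sq_nonneg x]
end

section
/- Let n, k ≥ 1, let g(x,y) = ∏_{i=1}^{k}(x² − i²y²), f(x,y) = x·(x^{2n}+y^{2n})·g(x,y), and ℓ(x,y) = x − (k+1)y. Then the polynomial ℓ_x·f_y − ℓ_y·f_x, restricted to y = 1, is strictly positive at x = k+1; hence ℓ does not divide ℓ_x·f_y − ℓ_y·f_x. -/
/-!
The point `(k + 1, 1)` lies on the line `ℓ = 0`, and `ℓ_x ∂_y - ℓ_y ∂_x = ∂_y + (k + 1) ∂_x` is the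
derivative along the vector `(k + 1, 1)` itself. Since `f` is homogeneous of degree `2n + 2k + 1`,
Euler's identity turns its value there into `(2n + 2k + 1) f(k + 1, 1)`, and
`f(k + 1, 1) = (k + 1)((k + 1)^{2n} + 1) ∏_{i=1}^{k} ((k + 1)² - i²) > 0` because every `i ≤ k`.
A polynomial divisible by `ℓ` vanishes at `(k + 1, 1)`.
-/

open MvPolynomial Real

namespace MvPolynomial

variable {R σ τ : Type*}

theorem IsHomogeneous.eval_pderiv_one_add_C_mul_pderiv_zero [CommSemiring R]
    {φ : MvPolynomial (Fin 2) R} {d : ℕ} (h : φ.IsHomogeneous d) (a : R) :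
    eval ![a, 1] (pderiv 1 φ + C a * pderiv 0 φ) = d * eval ![a, 1] φ := by
  have euler := congrArg (eval ![a, 1]) h.sum_X_mul_pderiv
  simp only [Fin.sum_univ_two, map_add, map_mul, eval_X, nsmul_eq_mul] at euler
  simpa [add_comm] using euler

section OddForm

variable [CommRing R]

/-- The form `f` of the statement, in the variables `x` (for `X 0`) and `y` (for `X 1`). -/
noncomputable def oddForm (x y : σ) (n k : ℕ) : MvPolynomial σ R :=
  X x * (X x ^ (2 * n) + X y ^ (2 * n)) *
    ∏ i ∈ Finset.Icc 1 k, (X x ^ 2 - C ((i : R) ^ 2) * X y ^ 2)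

theorem rename_oddForm (e : σ → τ) (x y : σ) (n k : ℕ) :
    rename e (oddForm x y n k : MvPolynomial σ R) = oddForm (e x) (e y) n k := by
  simp [oddForm, map_prod]

theorem isHomogeneous_prod_X_sq_sub_C_mul_X_sq {ι : Type*} (s : Finset ι) (r : ι → R)
    (x y : σ) : (∏ i ∈ s, (X x ^ 2 - C (r i) * X y ^ 2)).IsHomogeneous (2 * s.card) := by
  have := IsHomogeneous.prod s _ (fun _ ↦ 2) fun i _ ↦
    (isHomogeneous_X_pow x 2).sub (isHomogeneous_C_mul_X_pow (r i) y 2)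
  rwa [Finset.sum_const, smul_eq_mul, mul_comm] at this

theorem isHomogeneous_oddForm (x y : σ) (n k : ℕ) :
    (oddForm x y n k : MvPolynomial σ R).IsHomogeneous (2 * n + 2 * k + 1) := by
  rw [show 2 * n + 2 * k + 1 = 1 + 2 * n + 2 * (Finset.Icc 1 k).card by simp; ring]
  exact ((isHomogeneous_X R x).mul ((isHomogeneous_X_pow x _).add (isHomogeneous_X_pow y _))).mul
    (isHomogeneous_prod_X_sq_sub_C_mul_X_sq _ _ x y)

theorem eval_oddForm_pos [LinearOrder R] [IsStrictOrderedRing R] {x y : σ} {v : σ → R} {a : R}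
    (hvx : v x = a) (hvy : v y = 1) (n : ℕ) {k : ℕ} (hk : (k : R) < a) :
    0 < eval v (oddForm x y n k) := by
  have ha : 0 < a := (Nat.cast_nonneg k).trans_lt hk
  have hfactor : ∀ i ∈ Finset.Icc 1 k, 0 < a ^ 2 - (i : R) ^ 2 := fun i hi ↦ by
    have hik : (i : R) ≤ k := by exact_mod_cast (Finset.mem_Icc.mp hi).2
    nlinarith [Nat.cast_nonneg (α := R) i]
  simp only [oddForm, map_mul, map_add, map_pow, map_prod, map_sub, eval_X, eval_C, hvx, hvy,
    one_pow, mul_one]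
  have := Finset.prod_pos hfactor
  positivity

theorem eval_pderiv_add_C_mul_pderiv_oddForm_pos [LinearOrder R] [IsStrictOrderedRing R]
    {x y : σ} (hxy : x ≠ y) {v : σ → R} {a : R} (hvx : v x = a) (hvy : v y = 1) (n : ℕ) {k : ℕ}
    (hk : (k : R) < a) :
    0 < eval v (pderiv y (oddForm x y n k) + C a * pderiv x (oddForm x y n k)) := by
  set e : Fin 2 → σ := ![x, y]
  have he : Function.Injective e := by
    intro i j; fin_cases i <;> fin_cases j <;> simp [e, hxy, hxy.symm]
  have hrename : pderiv y (oddForm x y n k) + C a * pderiv x (oddForm x y n k)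
      = rename e (pderiv 1 (oddForm 0 1 n k) + C a * pderiv 0 (oddForm 0 1 n k)) := by
    rw [map_add, map_mul, rename_C, ← pderiv_rename he, ← pderiv_rename he, rename_oddForm]
    rfl
  have hv : v ∘ e = ![a, 1] := by
    ext i; fin_cases i <;> simp [e, hvx, hvy]
  rw [hrename, eval_rename, hv,
    (isHomogeneous_oddForm 0 1 n k).eval_pderiv_one_add_C_mul_pderiv_zero]
  have := eval_oddForm_pos (x := (0 : Fin 2)) (y := 1) (v := ![a, 1]) rfl rfl n hk
  positivity

end OddForm

end MvPolynomial

theorem no_factor_ell_general (n k : ℕ) :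
    0 < eval ![(k : ℝ) + 1, 1]
        (pderiv 1 (X 0 * (X 0 ^ (2 * n) + X 1 ^ (2 * n))
            * ∏ i ∈ Finset.Icc 1 k, (X 0 ^ 2 - C ((i : ℝ) ^ 2) * X 1 ^ 2))
          + C ((k : ℝ) + 1) * pderiv 0 (X 0 * (X 0 ^ (2 * n) + X 1 ^ (2 * n))
            * ∏ i ∈ Finset.Icc 1 k, (X 0 ^ 2 - C ((i : ℝ) ^ 2) * X 1 ^ 2))) ∧
    ¬ (X 0 - C ((k : ℝ) + 1) * X 1) ∣
        (pderiv 1 (X 0 * (X 0 ^ (2 * n) + X 1 ^ (2 * n))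
            * ∏ i ∈ Finset.Icc 1 k, (X 0 ^ 2 - C ((i : ℝ) ^ 2) * X 1 ^ 2))
          + C ((k : ℝ) + 1) * pderiv 0 (X 0 * (X 0 ^ (2 * n) + X 1 ^ (2 * n))
            * ∏ i ∈ Finset.Icc 1 k, (X 0 ^ 2 - C ((i : ℝ) ^ 2) * X 1 ^ 2))) := by
  refine ⟨eval_pderiv_add_C_mul_pderiv_oddForm_pos (x := (0 : Fin 2)) (y := 1) (by decide)
    rfl rfl n (lt_add_one _), ?_⟩
  -- the divisibility is elaborated in `MvPolynomial ℕ ℝ`, hence the lemma for arbitrary `σ`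
  rintro ⟨q, hq⟩
  have hpos := eval_pderiv_add_C_mul_pderiv_oddForm_pos (x := (0 : ℕ)) (y := 1) one_ne_zero.symm
    (v := fun i ↦ if i = 0 then (k : ℝ) + 1 else 1) (a := (k : ℝ) + 1) rfl rfl n (lt_add_one _)
  rw [oddForm, hq] at hpos
  simp at hpos

theorem no_factor_ell (n k : ℕ) (hn : 1 ≤ n) (hk : 1 ≤ k) :
    0 < eval ![(k : ℝ) + 1, 1]
        (pderiv 1 (X 0 * (X 0 ^ (2 * n) + X 1 ^ (2 * n))
            * ∏ i ∈ Finset.Icc 1 k, (X 0 ^ 2 - C ((i : ℝ) ^ 2) * X 1 ^ 2))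
          + C ((k : ℝ) + 1) * pderiv 0 (X 0 * (X 0 ^ (2 * n) + X 1 ^ (2 * n))
            * ∏ i ∈ Finset.Icc 1 k, (X 0 ^ 2 - C ((i : ℝ) ^ 2) * X 1 ^ 2))) ∧
    ¬ (X 0 - C ((k : ℝ) + 1) * X 1) ∣
        (pderiv 1 (X 0 * (X 0 ^ (2 * n) + X 1 ^ (2 * n))
            * ∏ i ∈ Finset.Icc 1 k, (X 0 ^ 2 - C ((i : ℝ) ^ 2) * X 1 ^ 2))
          + C ((k : ℝ) + 1) * pderiv 0 (X 0 * (X 0 ^ (2 * n) + X 1 ^ (2 * n))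
            * ∏ i ∈ Finset.Icc 1 k, (X 0 ^ 2 - C ((i : ℝ) ^ 2) * X 1 ^ 2))) :=
  no_factor_ell_general n k
end

section
/- Let n, k ≥ 1, let f(x,y) = x·(x^{2n}+y^{2n})·∏_{i=1}^{k}(x² − i²y²), P = (x − (k+1)y)·f, and L(x,y) = x + (k+1)y. Then the polynomial L_x·P_y − L_y·P_x, restricted to y = 1, is strictly positive at x = −(k+1); hence L does not divide L_x·P_y − L_y·P_x. -/
open MvPolynomial Real

/-!
The operator `L_x ∂_y - L_y ∂_x = ∂_y - (k+1) ∂_x` is the derivative in the direction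
`p = (-(k+1), 1)`, and `p` is also the zero of `L` at `y = 1`. Since `P` is homogeneous of degree
`d = 2n + 2k + 2`, Euler's identity turns this derivative at `p` into `d · P(p)`, and
`P(p) = 2 (k+1)² ((k+1)^{2n} + 1) ∏_{i=1}^{k} ((k+1)² - i²) > 0`. A multiple of `L` would vanish
at `p`, so `L` is not a factor.
-/

namespace MvPolynomial

theorem IsHomogeneous.sum_mul_eval_pderiv {σ R : Type*} [Fintype σ] [CommSemiring R]
    {φ : MvPolynomial σ R} {n : ℕ} (h : φ.IsHomogeneous n) (p : σ → R) :
    ∑ i, p i * eval p (pderiv i φ) = n * eval p φ := by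
  simpa [map_sum, nsmul_eq_mul] using congrArg (eval p) h.sum_X_mul_pderiv

theorem IsHomogeneous.eval_pderiv_one_sub_mul_pderiv_zero {R : Type*} [CommRing R]
    {φ : MvPolynomial (Fin 2) R} {n : ℕ} (h : φ.IsHomogeneous n) (c : R) :
    eval ![-c, 1] (pderiv 1 φ - C c * pderiv 0 φ) = n * eval ![-c, 1] φ := by
  rw [← h.sum_mul_eval_pderiv, Fin.sum_univ_two]
  simp only [map_sub, map_mul, eval_C, Matrix.cons_val_zero, Matrix.cons_val_one]
  ring

/-- Euler's identity needs finitely many variables; renaming carries it to any `σ`. -/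
theorem IsHomogeneous.eval_pderiv_sub_mul_pderiv_rename {σ R : Type*} [CommRing R]
    {φ : MvPolynomial (Fin 2) R} {n : ℕ} (h : φ.IsHomogeneous n) {a b : σ} (hab : a ≠ b)
    {w : σ → R} {c : R} (ha : w a = -c) (hb : w b = 1) :
    eval w (pderiv b (rename ![a, b] φ) - C c * pderiv a (rename ![a, b] φ))
      = n * eval ![-c, 1] φ := by
  have hinj : Function.Injective ![a, b] := injective_pair_iff_ne.mpr hab
  have hw : w ∘ ![a, b] = ![-c, 1] := by
    ext i
    fin_cases i <;> simp [ha, hb]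
  rw [← h.eval_pderiv_one_sub_mul_pderiv_zero, ← hw, ← eval_rename]
  simp only [map_sub, map_mul, rename_C, ← pderiv_rename hinj, Matrix.cons_val_zero,
    Matrix.cons_val_one]

end MvPolynomial

section polyP

variable {σ : Type*} (a b : σ) (n k : ℕ) (c : ℝ)

noncomputable def polyP : MvPolynomial σ ℝ :=
  (X a - C c * X b) * (X a * (X a ^ (2 * n) + X b ^ (2 * n))
    * ∏ i ∈ Finset.Icc 1 k, (X a ^ 2 - C ((i : ℝ) ^ 2) * X b ^ 2))

theorem polyP_eq_rename : polyP a b n k c = rename ![a, b] (polyP 0 1 n k c) := by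
  simp [polyP]

theorem isHomogeneous_polyP : (polyP a b n k c).IsHomogeneous (2 * n + 2 * k + 2) := by
  have hlin : (X a - C c * X b : MvPolynomial σ ℝ).IsHomogeneous 1 :=
    (isHomogeneous_X ℝ a).sub (isHomogeneous_C_mul_X c b)
  have hsum : (X a ^ (2 * n) + X b ^ (2 * n) : MvPolynomial σ ℝ).IsHomogeneous (2 * n) :=
    (isHomogeneous_X_pow a _).add (isHomogeneous_X_pow b _)
  have hprod : (∏ i ∈ Finset.Icc 1 k, (X a ^ 2 - C ((i : ℝ) ^ 2) * X b ^ 2) :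
      MvPolynomial σ ℝ).IsHomogeneous (∑ _i ∈ Finset.Icc 1 k, 2) :=
    IsHomogeneous.prod _ _ _ fun _ _ =>
      (isHomogeneous_X_pow a 2).sub (isHomogeneous_C_mul_X_pow _ b 2)
  have h := hlin.mul (((isHomogeneous_X ℝ a).mul hsum).mul hprod)
  simp only [Finset.sum_const, Nat.card_Icc, Nat.add_sub_cancel, smul_eq_mul] at h
  rwa [show 2 * n + 2 * k + 2 = 1 + (1 + 2 * n + k * 2) by ring]

variable {a b c}

theorem eval_polyP {w : σ → ℝ} (ha : w a = -c) (hb : w b = 1) :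
    eval w (polyP a b n k c)
      = 2 * c ^ 2 * (c ^ (2 * n) + 1) * ∏ i ∈ Finset.Icc 1 k, (c ^ 2 - (i : ℝ) ^ 2) := by
  simp only [polyP, map_mul, map_sub, map_add, map_pow, map_prod, eval_X, eval_C, ha, hb,
    one_pow, mul_one, (even_two_mul n).neg_pow, even_two.neg_pow]
  ring

theorem eval_polyP_pos {w : σ → ℝ} (ha : w a = -c) (hb : w b = 1) (hc : (k : ℝ) < c) :
    0 < eval w (polyP a b n k c) := by
  have hc0 : 0 < c := (Nat.cast_nonneg k).trans_lt hc
  have hprod : 0 < ∏ i ∈ Finset.Icc 1 k, (c ^ 2 - (i : ℝ) ^ 2) := by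
    refine Finset.prod_pos fun i hi => sub_pos.mpr ?_
    have hik : (i : ℝ) ≤ k := by exact_mod_cast (Finset.mem_Icc.mp hi).2
    exact pow_lt_pow_left₀ (hik.trans_lt hc) (Nat.cast_nonneg i) two_ne_zero
  rw [eval_polyP n k ha hb]
  positivity

theorem eval_pderiv_sub_mul_pderiv_polyP_pos (hab : a ≠ b) {w : σ → ℝ} (ha : w a = -c)
    (hb : w b = 1) (hc : (k : ℝ) < c) :
    0 < eval w (pderiv b (polyP a b n k c) - C c * pderiv a (polyP a b n k c)) := by
  rw [polyP_eq_rename, (isHomogeneous_polyP 0 1 n k c).eval_pderiv_sub_mul_pderiv_rename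
    hab ha hb]
  exact mul_pos (by positivity) (eval_polyP_pos n k rfl rfl hc)

end polyP

theorem no_factor_L_general (n k : ℕ) :
    0 < eval ![-((k : ℝ) + 1), 1]
        (pderiv 1 ((X 0 - C ((k : ℝ) + 1) * X 1) * (X 0 * (X 0 ^ (2 * n) + X 1 ^ (2 * n))
            * ∏ i ∈ Finset.Icc 1 k, (X 0 ^ 2 - C ((i : ℝ) ^ 2) * X 1 ^ 2)))
          - C ((k : ℝ) + 1) * pderiv 0 ((X 0 - C ((k : ℝ) + 1) * X 1)
            * (X 0 * (X 0 ^ (2 * n) + X 1 ^ (2 * n))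
            * ∏ i ∈ Finset.Icc 1 k, (X 0 ^ 2 - C ((i : ℝ) ^ 2) * X 1 ^ 2)))) ∧
    ¬ (X 0 + C ((k : ℝ) + 1) * X 1) ∣
        (pderiv 1 ((X 0 - C ((k : ℝ) + 1) * X 1) * (X 0 * (X 0 ^ (2 * n) + X 1 ^ (2 * n))
            * ∏ i ∈ Finset.Icc 1 k, (X 0 ^ 2 - C ((i : ℝ) ^ 2) * X 1 ^ 2)))
          - C ((k : ℝ) + 1) * pderiv 0 ((X 0 - C ((k : ℝ) + 1) * X 1)
            * (X 0 * (X 0 ^ (2 * n) + X 1 ^ (2 * n))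
            * ∏ i ∈ Finset.Icc 1 k, (X 0 ^ 2 - C ((i : ℝ) ^ 2) * X 1 ^ 2)))) := by
  set c : ℝ := k + 1
  have hc : (k : ℝ) < c := lt_add_one _
  refine ⟨eval_pderiv_sub_mul_pderiv_polyP_pos n k (σ := Fin 2) zero_ne_one rfl rfl hc, ?_⟩
  -- The divisibility is stated in `MvPolynomial ℕ ℝ`: the numerals `0`, `1` default to `ℕ`.
  let w : ℕ → ℝ := fun j => if j = 0 then -c else 1
  have hpos := eval_pderiv_sub_mul_pderiv_polyP_pos n k (σ := ℕ) zero_ne_one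
    (w := w) rfl rfl hc
  have hL : eval w (X 0 + C c * X 1) = 0 := by simp [w]
  exact fun hdvd => hpos.ne' (zero_dvd_iff.mp (hL ▸ map_dvd (eval w) hdvd))

theorem no_factor_L (n k : ℕ) (hn : 1 ≤ n) (hk : 1 ≤ k) :
    0 < eval ![-((k : ℝ) + 1), 1]
        (pderiv 1 ((X 0 - C ((k : ℝ) + 1) * X 1) * (X 0 * (X 0 ^ (2 * n) + X 1 ^ (2 * n))
            * ∏ i ∈ Finset.Icc 1 k, (X 0 ^ 2 - C ((i : ℝ) ^ 2) * X 1 ^ 2)))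
          - C ((k : ℝ) + 1) * pderiv 0 ((X 0 - C ((k : ℝ) + 1) * X 1)
            * (X 0 * (X 0 ^ (2 * n) + X 1 ^ (2 * n))
            * ∏ i ∈ Finset.Icc 1 k, (X 0 ^ 2 - C ((i : ℝ) ^ 2) * X 1 ^ 2)))) ∧
    ¬ (X 0 + C ((k : ℝ) + 1) * X 1) ∣
        (pderiv 1 ((X 0 - C ((k : ℝ) + 1) * X 1) * (X 0 * (X 0 ^ (2 * n) + X 1 ^ (2 * n))
            * ∏ i ∈ Finset.Icc 1 k, (X 0 ^ 2 - C ((i : ℝ) ^ 2) * X 1 ^ 2)))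
          - C ((k : ℝ) + 1) * pderiv 0 ((X 0 - C ((k : ℝ) + 1) * X 1)
            * (X 0 * (X 0 ^ (2 * n) + X 1 ^ (2 * n))
            * ∏ i ∈ Finset.Icc 1 k, (X 0 ^ 2 - C ((i : ℝ) ^ 2) * X 1 ^ 2)))) :=
  no_factor_L_general n k
end
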